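/- arXiv:2408.15468 — 7 statements merged into one kernel-verified Lean document; each statement's English description precedes it below -/
import Mathlib

section
/- If f : K → ℝ is bounded and g : K → ℝ is β-Hölder continuous on K with 0 < β ≤ 1 and ∑_{s∈S} r_s^β < 1 (i.e. β exceeds the similarity dimension of K), then φ_n(f,g) → 0 as n → ∞; in particular the pair (f,g) is integrable with φ(f,g) = 0. -/
open Filter Topology

/-- For a word `s = (s_1, …, s_n)` over the alphabet `Fin (N+1)`,
`wmap F s = F s_1 ∘ ⋯ ∘ F s_n`. -/
noncomputable def wmap {N n : ℕ} (F : Fin (N + 1) → ℝ → ℝ) (s : Fin n → Fin (N + 1)) :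
    ℝ → ℝ :=
  (List.ofFn s).foldr (fun i h => F i ∘ h) id

/-- `φ_n(f,g) = ∑_{s ∈ S^n} (f(a_s)+f(b_s))·(g(b_s)−g(a_s))`. -/
noncomputable def phiSeq {N : ℕ} (F : Fin (N + 1) → ℝ → ℝ) (a b : ℝ) (f g : ℝ → ℝ)
    (n : ℕ) : ℝ :=
  ∑ s : Fin n → Fin (N + 1),
    (f (wmap F s a) + f (wmap F s b)) * (g (wmap F s b) - g (wmap F s a))

/-- The self-similar set `K = ⋂_{n ≥ 1} ⋃_{s ∈ S^n} f_s([a,b])`. -/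
noncomputable def ssSet {N : ℕ} (F : Fin (N + 1) → ℝ → ℝ) (a b : ℝ) : Set ℝ :=
  ⋂ n : ℕ, ⋃ s : Fin (n + 1) → Fin (N + 1), wmap F s '' Set.Icc a b

/-! The endpoints `a_s`, `b_s` lie in `K`: the maps `f_i` send `[a, b]` into itself, hence `K`
into itself, and `a`, `b` are fixed points of `f_0`, `f_{N-1}` that lie in `K`. Since
`b_s - a_s = r_{s_1} ⋯ r_{s_n} (b - a)`, the Hölder bound makes the term of `s` at most
`2 ‖f‖_∞ |g|_β (b - a)^β ∏ r_{s_i}^β`, and these products sum to `(∑ r_i^β)^n → 0`. -/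

open Set

section WordMaps

variable {N : ℕ} {F : Fin (N + 1) → ℝ → ℝ}

lemma wmap_zero (s : Fin 0 → Fin (N + 1)) : wmap F s = id := rfl

lemma wmap_succ {n : ℕ} (s : Fin (n + 1) → Fin (N + 1)) :
    wmap F s = F (s 0) ∘ wmap F (fun i => s i.succ) := by
  simp only [wmap, List.ofFn_succ, List.foldr_cons]

lemma wmap_cons {n : ℕ} (i : Fin (N + 1)) (t : Fin n → Fin (N + 1)) :
    wmap F (Fin.cons i t) = F i ∘ wmap F t := by
  simp only [wmap_succ, Fin.cons_zero, Fin.cons_succ]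

lemma wmap_const_apply_of_isFixedPt {j : Fin (N + 1)} {x : ℝ} (hx : F j x = x) (n : ℕ) :
    wmap F (fun _ : Fin n => j) x = x := by
  induction n with
  | zero => rfl
  | succ n ih => rw [wmap_succ, Function.comp_apply, ih, hx]

lemma mapsTo_wmap {A : Set ℝ} (hF : ∀ i, MapsTo (F i) A A) {n : ℕ}
    (s : Fin n → Fin (N + 1)) : MapsTo (wmap F s) A A := by
  induction n with
  | zero => exact mapsTo_id A
  | succ n ih => rw [wmap_succ]; exact (hF (s 0)).comp (ih _)

lemma wmap_sub_wmap_of_affine {r c : Fin (N + 1) → ℝ} (hF : ∀ i x, F i x = r i * x + c i)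
    {n : ℕ} (s : Fin n → Fin (N + 1)) (x y : ℝ) :
    wmap F s y - wmap F s x = (∏ i, r (s i)) * (y - x) := by
  induction n with
  | zero => simp [wmap_zero]
  | succ n ih =>
    simp only [wmap_succ, Function.comp_apply, hF, Fin.prod_univ_succ]
    linear_combination r (s 0) * ih _

end WordMaps

section SelfSimilarSet

variable {N : ℕ} {F : Fin (N + 1) → ℝ → ℝ} {a b : ℝ}

lemma exists_wmap_eq_of_mem_ssSet (hF : ∀ i, MapsTo (F i) (Icc a b) (Icc a b))
    {y : ℝ} (hy : y ∈ ssSet F a b) (n : ℕ) :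
    ∃ t : Fin n → Fin (N + 1), ∃ z ∈ Icc a b, wmap F t z = y := by
  have hy' := mem_iInter.1 hy
  cases n with
  | zero =>
    obtain ⟨t, hy₀⟩ := mem_iUnion.1 (hy' 0)
    exact ⟨Fin.elim0, y, mapsTo_wmap hF t |>.image_subset hy₀, rfl⟩
  | succ n =>
    obtain ⟨t, z, hz, rfl⟩ := mem_iUnion.1 (hy' n)
    exact ⟨t, z, hz, rfl⟩

lemma mapsTo_ssSet (hF : ∀ i, MapsTo (F i) (Icc a b) (Icc a b)) (i : Fin (N + 1)) :
    MapsTo (F i) (ssSet F a b) (ssSet F a b) := fun y hy =>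
  mem_iInter.2 fun n => by
    obtain ⟨t, z, hz, rfl⟩ := exists_wmap_eq_of_mem_ssSet hF hy n
    exact mem_iUnion.2 ⟨Fin.cons i t, z, hz, by rw [wmap_cons]; rfl⟩

lemma mem_ssSet_of_isFixedPt {x : ℝ} (hx : x ∈ Icc a b) {j : Fin (N + 1)} (hfix : F j x = x) :
    x ∈ ssSet F a b :=
  mem_iInter.2 fun n =>
    mem_iUnion.2 ⟨fun _ => j, x, hx, wmap_const_apply_of_isFixedPt hfix (n + 1)⟩

lemma mapsTo_Icc_of_monotone (hmono : ∀ i, Monotone (F i)) (hab : a ≤ b)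
    (ha : F 0 a = a) (hb : F (Fin.last N) b = b)
    (hord : ∀ l : Fin N, F l.castSucc b ≤ F l.succ a) (i : Fin (N + 1)) :
    MapsTo (F i) (Icc a b) (Icc a b) := by
  have ha_mono : Monotone (fun i => F i a) := Fin.monotone_iff_le_succ.2 fun l =>
    (hmono _ hab).trans (hord l)
  have hb_mono : Monotone (fun i => F i b) := Fin.monotone_iff_le_succ.2 fun l =>
    (hord l).trans (hmono _ hab)
  intro x hx
  exact ⟨(ha.ge.trans (ha_mono (Fin.zero_le i))).trans (hmono i hx.1),
    (hmono i hx.2).trans ((hb_mono (Fin.le_last i)).trans hb.le)⟩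

end SelfSimilarSet

section Estimate

variable {N : ℕ} {F : Fin (N + 1) → ℝ → ℝ} {r c : Fin (N + 1) → ℝ} {a b : ℝ}
  {f g : ℝ → ℝ} {K : Set ℝ} {Cf Cg β : ℝ}

lemma abs_phiSeq_term_le (hr : ∀ i, 0 ≤ r i) (hF : ∀ i x, F i x = r i * x + c i)
    (hab : a ≤ b) (hf : ∀ x ∈ K, |f x| ≤ Cf)
    (hg : ∀ x ∈ K, ∀ y ∈ K, |g x - g y| ≤ Cg * |x - y| ^ β)
    {n : ℕ} {s : Fin n → Fin (N + 1)} (haK : wmap F s a ∈ K) (hbK : wmap F s b ∈ K) :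
    |(f (wmap F s a) + f (wmap F s b)) * (g (wmap F s b) - g (wmap F s a))| ≤
      2 * Cf * Cg * (b - a) ^ β * ∏ i, r (s i) ^ β := by
  have hprod : 0 ≤ ∏ i, r (s i) := Finset.prod_nonneg fun i _ => hr (s i)
  have hgs : |g (wmap F s b) - g (wmap F s a)| ≤ Cg * ((b - a) ^ β * ∏ i, r (s i) ^ β) := by
    calc |g (wmap F s b) - g (wmap F s a)|
        ≤ Cg * |wmap F s b - wmap F s a| ^ β := hg _ hbK _ haK
      _ = Cg * ((b - a) ^ β * ∏ i, r (s i) ^ β) := by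
        rw [wmap_sub_wmap_of_affine hF, abs_of_nonneg (mul_nonneg hprod (sub_nonneg.2 hab)),
          Real.mul_rpow hprod (sub_nonneg.2 hab), ← Real.finsetProd_rpow _ _ fun i _ => hr (s i)]
        ring
  have hfs : |f (wmap F s a) + f (wmap F s b)| ≤ 2 * Cf := by
    linarith [abs_add_le (f (wmap F s a)) (f (wmap F s b)), hf _ haK, hf _ hbK]
  calc _ = |f (wmap F s a) + f (wmap F s b)| * |g (wmap F s b) - g (wmap F s a)| := abs_mul _ _
    _ ≤ 2 * Cf * (Cg * ((b - a) ^ β * ∏ i, r (s i) ^ β)) :=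
        mul_le_mul_of_nonneg hfs hgs (abs_nonneg _) ((abs_nonneg _).trans hgs)
    _ = _ := by ring

lemma abs_phiSeq_le (hr : ∀ i, 0 ≤ r i) (hF : ∀ i x, F i x = r i * x + c i)
    (hab : a ≤ b) (hf : ∀ x ∈ K, |f x| ≤ Cf)
    (hg : ∀ x ∈ K, ∀ y ∈ K, |g x - g y| ≤ Cg * |x - y| ^ β) {n : ℕ}
    (haK : ∀ s : Fin n → Fin (N + 1), wmap F s a ∈ K)
    (hbK : ∀ s : Fin n → Fin (N + 1), wmap F s b ∈ K) :
    |phiSeq F a b f g n| ≤ 2 * Cf * Cg * (b - a) ^ β * (∑ i, r i ^ β) ^ n :=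
  calc |phiSeq F a b f g n|
      ≤ ∑ s : Fin n → Fin (N + 1),
          |(f (wmap F s a) + f (wmap F s b)) * (g (wmap F s b) - g (wmap F s a))| :=
        Finset.abs_sum_le_sum_abs _ _
    _ ≤ ∑ s : Fin n → Fin (N + 1), 2 * Cf * Cg * (b - a) ^ β * ∏ i, r (s i) ^ β :=
        Finset.sum_le_sum fun s _ => abs_phiSeq_term_le hr hF hab hf hg (haK s) (hbK s)
    _ = _ := by rw [Fintype.sum_pow, Finset.mul_sum]

end Estimate

theorem tendsto_phiSeq_zero_of_bounded_of_holder_general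
    {N : ℕ} (r c : Fin (N + 1) → ℝ)
    (hr0 : ∀ s, 0 < r s)
    (a b : ℝ) (hab : a < b)
    (F : Fin (N + 1) → ℝ → ℝ) (hF : ∀ s x, F s x = r s * x + c s)
    (ha : F 0 a = a) (hb : F (Fin.last N) b = b)
    (hord : ∀ l : Fin N, F l.castSucc b ≤ F l.succ a)
    (f g : ℝ → ℝ) (β : ℝ)
    (hbdd : ∃ C : ℝ, ∀ x ∈ ssSet F a b, |f x| ≤ C)
    (hg : ∃ C : ℝ, ∀ x ∈ ssSet F a b, ∀ y ∈ ssSet F a b, |g x - g y| ≤ C * |x - y| ^ β)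
    (hdim : ∑ s : Fin (N + 1), r s ^ β < 1) :
    Tendsto (phiSeq F a b f g) atTop (nhds 0) := by
  obtain ⟨Cf, hf⟩ := hbdd
  obtain ⟨Cg, hg⟩ := hg
  have hmono : ∀ i, Monotone (F i) := fun i x y hxy => by
    simp only [hF]
    gcongr
    exact (hr0 i).le
  have hK := mapsTo_ssSet (mapsTo_Icc_of_monotone hmono hab.le ha hb hord)
  have haK : a ∈ ssSet F a b := mem_ssSet_of_isFixedPt ⟨le_rfl, hab.le⟩ ha
  have hbK : b ∈ ssSet F a b := mem_ssSet_of_isFixedPt ⟨hab.le, le_rfl⟩ hb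
  have hq : 0 ≤ ∑ i, r i ^ β := Finset.sum_nonneg fun i _ => Real.rpow_nonneg (hr0 i).le β
  refine squeeze_zero_norm (fun n => abs_phiSeq_le (fun i => (hr0 i).le) hF hab.le hf hg
    (fun s => mapsTo_wmap hK s haK) (fun s => mapsTo_wmap hK s hbK)) ?_
  simpa using (tendsto_pow_atTop_nhds_zero_of_lt_one hq hdim).const_mul (2 * Cf * Cg * (b - a) ^ β)

/-- If `f` is bounded on `K` and `g` is `β`-Hölder on `K` with `0 < β ≤ 1` and
`∑_s r_s^β < 1`, then `φ_n(f,g) → 0`. -/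
theorem tendsto_phiSeq_zero_of_bounded_of_holder
    {N : ℕ} (r c : Fin (N + 1) → ℝ)
    (hr0 : ∀ s, 0 < r s) (hr1 : ∀ s, r s < 1)
    (a b : ℝ) (hab : a < b)
    (F : Fin (N + 1) → ℝ → ℝ) (hF : ∀ s x, F s x = r s * x + c s)
    (ha : F 0 a = a) (hb : F (Fin.last N) b = b)
    (hord : ∀ l : Fin N, F l.castSucc b ≤ F l.succ a)
    (f g : ℝ → ℝ) (β : ℝ) (hβ0 : 0 < β) (hβ1 : β ≤ 1)
    (hbdd : ∃ C : ℝ, ∀ x ∈ ssSet F a b, |f x| ≤ C)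
    (hg : ∃ C : ℝ, ∀ x ∈ ssSet F a b, ∀ y ∈ ssSet F a b, |g x - g y| ≤ C * |x - y| ^ β)
    (hdim : ∑ s : Fin (N + 1), r s ^ β < 1) :
    Tendsto (phiSeq F a b f g) atTop (nhds 0) :=
  tendsto_phiSeq_zero_of_bounded_of_holder_general r c hr0 a b hab F hF ha hb hord f g β hbdd hg
    hdim
end

section
/- Let f : K → ℝ be α-Hölder continuous and g : K → ℝ be β-Hölder continuous with 0 < α, β ≤ 1 and ∑_{s∈S} r_s^{α+β} < 1 (i.e. α+β exceeds the similarity dimension of K). Then the pair (f,g) is integrable on K (i.e. the sequence (φ_n(f,g))_n converges) if and only if the series ∑_{n=1}^∞ ψ_n(f,g) converges. -/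
open Filter Topology

/-- `ψ_{n+1}(f,g) = ∑_{s ∈ S^n} ∑_{l=0}^{N−1} (f(b_{(s,l)})+f(a_{(s,l+1)}))·(g(a_{(s,l+1)})−g(b_{(s,l)}))`,
where the alphabet is `Fin (N+1)` (so `N` is the number of holes at each level);
`psiSeq F a b f g n` is `ψ_{n+1}(f,g)`. -/
noncomputable def psiSeq {N : ℕ} (F : Fin (N + 1) → ℝ → ℝ) (a b : ℝ) (f g : ℝ → ℝ)
    (n : ℕ) : ℝ :=
  ∑ s : Fin n → Fin (N + 1), ∑ l : Fin N,
    (f (wmap F s (F l.castSucc b)) + f (wmap F s (F l.succ a))) *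
      (g (wmap F s (F l.succ a)) - g (wmap F s (F l.castSucc b)))

private lemma foldr_comp {N : ℕ} (F : Fin (N+1) → ℝ → ℝ) (L : List (Fin (N+1)))
    (e : ℝ → ℝ) (x : ℝ) :
    L.foldr (fun i h => F i ∘ h) e x = L.foldr (fun i h => F i ∘ h) id (e x) := by
  induction L generalizing x with
  | nil => rfl
  | cons i L ih =>
    simp only [List.foldr_cons, Function.comp_apply]
    rw [ih]

private lemma wmap_snoc {N n : ℕ} (F : Fin (N+1) → ℝ → ℝ) (s : Fin n → Fin (N+1))
    (l : Fin (N+1)) (x : ℝ) :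
    wmap F (Fin.snoc s l) x = wmap F s (F l x) := by
  show (List.ofFn (Fin.snoc s l)).foldr (fun i h => F i ∘ h) id x = _
  rw [List.ofFn_succ']
  simp only [Fin.snoc_castSucc, Fin.snoc_last]
  rw [List.concat_eq_append, List.foldr_concat, foldr_comp]
  rfl

private lemma wmap_mono {N n : ℕ} (F : Fin (N+1) → ℝ → ℝ)
    (hm : ∀ l, Monotone (F l)) (s : Fin n → Fin (N+1)) : Monotone (wmap F s) := by
  show Monotone ((List.ofFn s).foldr (fun i h => F i ∘ h) id)
  generalize List.ofFn s = L
  induction L with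
  | nil => exact monotone_id
  | cons i L ih => exact (hm i).comp ih

private lemma wmap_sub {N : ℕ} (r c : Fin (N+1) → ℝ) (F : Fin (N+1) → ℝ → ℝ)
    (hF : ∀ s x, F s x = r s * x + c s) {n : ℕ} (s : Fin n → Fin (N+1)) (x y : ℝ) :
    wmap F s y - wmap F s x = (∏ i, r (s i)) * (y - x) := by
  have key : ∀ L : List (Fin (N+1)),
      L.foldr (fun i h => F i ∘ h) id y - L.foldr (fun i h => F i ∘ h) id x
        = (L.map r).prod * (y - x) := by
    intro L
    induction L with
    | nil => simp
    | cons i L ih =>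
      simp only [List.foldr_cons, Function.comp_apply, List.map_cons, List.prod_cons, hF]
      rw [mul_assoc, ← ih]
      ring
  show (List.ofFn s).foldr _ id y - (List.ofFn s).foldr _ id x = _
  rw [key, List.map_ofFn, List.prod_ofFn]
  rfl

private lemma exists_ofFn {γ : Type*} (L : List γ) (m : ℕ) (h : L.length = m+1) :
    ∃ t : Fin (m+1) → γ, List.ofFn t = L := by
  refine ⟨fun i => L.get (Fin.cast h.symm i), ?_⟩
  apply List.ext_get (by simp [h])
  intro i h1 h2
  rcases i with _ | i <;> simp [List.getElem_ofFn]

section Mem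
variable {N : ℕ} {F : Fin (N+1) → ℝ → ℝ} {a b : ℝ}

private lemma F_mapsTo (hm : ∀ l, Monotone (F l)) (haA : ∀ l, a ≤ F l a)
    (hbB : ∀ l, F l b ≤ b) (l : Fin (N+1)) {x : ℝ} (hx : x ∈ Set.Icc a b) :
    F l x ∈ Set.Icc a b :=
  ⟨le_trans (haA l) (hm l hx.1), le_trans (hm l hx.2) (hbB l)⟩

private lemma foldr_mapsTo (hm : ∀ l, Monotone (F l)) (haA : ∀ l, a ≤ F l a)
    (hbB : ∀ l, F l b ≤ b) (L : List (Fin (N+1))) {x : ℝ} (hx : x ∈ Set.Icc a b) :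
    L.foldr (fun i h => F i ∘ h) id x ∈ Set.Icc a b := by
  induction L with
  | nil => exact hx
  | cons i L ih => exact F_mapsTo hm haA hbB i ih

private lemma mem_ssSet (hm : ∀ l, Monotone (F l)) (haA : ∀ l, a ≤ F l a)
    (hbB : ∀ l, F l b ≤ b)
    {x : ℝ} (hx : x ∈ Set.Icc a b) (l0 : Fin (N+1)) (hl0 : F l0 x = x)
    {n : ℕ} (s : Fin n → Fin (N+1)) :
    wmap F s x ∈ ssSet F a b := by
  rw [ssSet, Set.mem_iInter]
  intro m
  rw [Set.mem_iUnion]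
  set ff : Fin (N+1) → (ℝ → ℝ) → (ℝ → ℝ) := fun i h => F i ∘ h with hff
  set L0 := List.ofFn s with hL0
  set R := List.replicate (m+1) l0 with hR
  set L := (L0 ++ R).take (m+1) with hL
  have hlen : L.length = m + 1 := by
    rw [hL, List.length_take, List.length_append, hR, List.length_replicate]
    omega
  have hrep : R.foldr ff id x = x := by
    rw [hR]
    induction (m+1) with
    | zero => rfl
    | succ k ih =>
      simp only [hff] at ih ⊢
      simpa [List.replicate_succ, ih] using hl0
  have h1 : (L0 ++ R).foldr ff id x = L0.foldr ff id x := by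
    rw [List.foldr_append, foldr_comp F, hrep]
  have h2 : L0 ++ R = L ++ (L0 ++ R).drop (m+1) := (List.take_append_drop _ _).symm
  have h3 : (L0 ++ R).foldr ff id x
      = L.foldr ff id (((L0 ++ R).drop (m+1)).foldr ff id x) := by
    conv_lhs => rw [h2]
    rw [List.foldr_append, foldr_comp F]
  obtain ⟨t, ht⟩ := exists_ofFn L m hlen
  refine ⟨t, ((L0 ++ R).drop (m+1)).foldr ff id x, foldr_mapsTo hm haA hbB _ hx, ?_⟩
  show (List.ofFn t).foldr _ id _ = _
  rw [ht, ← h3, h1]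
  rfl

end Mem

private noncomputable def TT (f g : ℝ → ℝ) (x y : ℝ) : ℝ := (f x + f y) * (g y - g x)

private lemma cross_bound (K : Set ℝ) (f g : ℝ → ℝ) (α β Cf Cg : ℝ)
    (hα0 : 0 < α) (hβ0 : 0 < β) (hCf : 0 ≤ Cf) (hCg : 0 ≤ Cg)
    (Hf : ∀ x ∈ K, ∀ y ∈ K, |f x - f y| ≤ Cf * |x - y| ^ α)
    (Hg : ∀ x ∈ K, ∀ y ∈ K, |g x - g y| ≤ Cg * |x - y| ^ β)
    {x y z : ℝ} (hx : x ∈ K) (hy : y ∈ K) (hz : z ∈ K)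
    (hxy : x ≤ y) (hyz : y ≤ z) :
    |TT f g x y + TT f g y z - TT f g x z| ≤ 2 * (Cf * Cg) * (z - x) ^ (α + β) := by
  have hxz : x ≤ z := hxy.trans hyz
  have habs : ∀ u v : ℝ, u ∈ K → v ∈ K → u ≤ v → v - u ≤ z - x →
      |f v - f u| ≤ Cf * (z - x) ^ α := by
    intro u v hu hv huv hle
    refine (Hf v hv u hu).trans (mul_le_mul_of_nonneg_left ?_ hCf)
    refine Real.rpow_le_rpow (abs_nonneg _) ?_ hα0.le
    rw [abs_of_nonneg (by linarith)]; exact hle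
  have habsg : ∀ u v : ℝ, u ∈ K → v ∈ K → u ≤ v → v - u ≤ z - x →
      |g v - g u| ≤ Cg * (z - x) ^ β := by
    intro u v hu hv huv hle
    refine (Hg v hv u hu).trans (mul_le_mul_of_nonneg_left ?_ hCg)
    refine Real.rpow_le_rpow (abs_nonneg _) ?_ hβ0.le
    rw [abs_of_nonneg (by linarith)]; exact hle
  have h1 := habs x y hx hy hxy (by linarith)
  have h2 := habsg y z hy hz hyz (by linarith)
  have h3 := habs y z hy hz hyz (by linarith)
  have h4 := habsg x y hx hy hxy (by linarith)
  have key : TT f g x y + TT f g y z - TT f g x z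
      = (f y - f x) * (g z - g y) - (f z - f y) * (g y - g x) := by
    unfold TT; ring
  have hpow : (z - x) ^ α * (z - x) ^ β = (z - x) ^ (α + β) :=
    (Real.rpow_add' (by linarith) (by positivity)).symm
  have hPα : (0:ℝ) ≤ (z - x) ^ α := Real.rpow_nonneg (by linarith) _
  have hPβ : (0:ℝ) ≤ (z - x) ^ β := Real.rpow_nonneg (by linarith) _
  rw [key]
  calc |(f y - f x) * (g z - g y) - (f z - f y) * (g y - g x)|
      ≤ |(f y - f x) * (g z - g y)| + |(f z - f y) * (g y - g x)| :=
        abs_sub _ _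
    _ = |f y - f x| * |g z - g y| + |f z - f y| * |g y - g x| := by
        rw [abs_mul, abs_mul]
    _ ≤ (Cf * (z - x) ^ α) * (Cg * (z - x) ^ β)
        + (Cf * (z - x) ^ α) * (Cg * (z - x) ^ β) := by
        gcongr
    _ = 2 * (Cf * Cg) * ((z - x) ^ α * (z - x) ^ β) := by ring
    _ = 2 * (Cf * Cg) * (z - x) ^ (α + β) := by rw [hpow]

private lemma chain_le {n : ℕ} {p q : Fin (n+1) → ℝ}
    (hpq : ∀ l, p l ≤ q l) (hqp : ∀ l : Fin n, q l.castSucc ≤ p l.succ) (l : Fin (n+1)) :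
    p 0 ≤ q l := by
  induction l using Fin.induction with
  | zero => exact hpq 0
  | succ i ih => exact le_trans ih (le_trans (hqp i) (hpq i.succ))

private lemma chain_bound (K : Set ℝ) (f g : ℝ → ℝ) (α β Cf Cg : ℝ)
    (hα0 : 0 < α) (hβ0 : 0 < β) (hCf : 0 ≤ Cf) (hCg : 0 ≤ Cg)
    (Hf : ∀ x ∈ K, ∀ y ∈ K, |f x - f y| ≤ Cf * |x - y| ^ α)
    (Hg : ∀ x ∈ K, ∀ y ∈ K, |g x - g y| ≤ Cg * |x - y| ^ β) :
    ∀ (n : ℕ) (p q : Fin (n+1) → ℝ),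
      (∀ l, p l ∈ K) → (∀ l, q l ∈ K) →
      (∀ l, p l ≤ q l) → (∀ l : Fin n, q l.castSucc ≤ p l.succ) →
      |(∑ l, TT f g (p l) (q l)) + (∑ l : Fin n, TT f g (q l.castSucc) (p l.succ))
        - TT f g (p 0) (q (Fin.last n))|
        ≤ 2 * (2*(n:ℝ)+1) * (Cf*Cg) * (q (Fin.last n) - p 0) ^ (α+β) := by
  intro n
  induction n with
  | zero =>
    intro p q hpK hqK hpq hqp
    have h0 : q (Fin.last 0) = q 0 := rfl
    simp only [Finset.univ_eq_empty, Finset.sum_empty, h0, add_zero]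
    rw [Fin.sum_univ_one, sub_self, abs_zero]
    have h1 : (0:ℝ) ≤ (q 0 - p 0) ^ (α+β) := Real.rpow_nonneg (by linarith [hpq 0]) _
    have h2 : (0:ℝ) ≤ 2 * (2*((0:ℕ):ℝ)+1) * (Cf*Cg) := by positivity
    exact mul_nonneg h2 h1
  | succ n ih =>
    intro p q hpK hqK hpq hqp
    set p' : Fin (n+1) → ℝ := fun l => p l.castSucc with hp'
    set q' : Fin (n+1) → ℝ := fun l => q l.castSucc with hq'
    have hIH := ih p' q' (fun l => hpK _) (fun l => hqK _) (fun l => hpq _)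
      (fun l => by
        show q l.castSucc.castSucc ≤ p l.succ.castSucc
        rw [← Fin.succ_castSucc]
        exact hqp l.castSucc)
    set x0 := p 0 with hx0
    set y1 := q ((Fin.last n).castSucc) with hy1
    set z1 := p (Fin.last (n+1)) with hz1
    set w := q (Fin.last (n+1)) with hw
    have hp'0 : p' 0 = x0 := by simp [hp', hx0]
    have hq'last : q' (Fin.last n) = y1 := rfl
    have hx0y1 : x0 ≤ y1 := chain_le hpq hqp _
    have hy1z1 : y1 ≤ z1 := by
      have := hqp (Fin.last n)
      rwa [Fin.succ_last] at this
    have hz1w : z1 ≤ w := hpq _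
    have hc1 := cross_bound K f g α β Cf Cg hα0 hβ0 hCf hCg Hf Hg
      (hpK 0) (hqK _) (hpK _) hx0y1 hy1z1
    have hc2 := cross_bound K f g α β Cf Cg hα0 hβ0 hCf hCg Hf Hg
      (hpK 0) (hpK _) (hqK _) (hx0y1.trans hy1z1) hz1w
    rw [Fin.sum_univ_castSucc (fun l : Fin (n+2) => TT f g (p l) (q l)),
        Fin.sum_univ_castSucc (fun l : Fin (n+1) => TT f g (q l.castSucc) (p l.succ))]
    have hsum2 : ∑ l : Fin n, TT f g (q l.castSucc.castSucc) (p l.castSucc.succ)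
        = ∑ l : Fin n, TT f g (q' l.castSucc) (p' l.succ) := by
      refine Finset.sum_congr rfl fun l _ => ?_
      rw [Fin.succ_castSucc]
    rw [hsum2]
    have hexpr :
        (∑ l : Fin (n+1), TT f g (p l.castSucc) (q l.castSucc)) + TT f g z1 w
          + ((∑ l : Fin n, TT f g (q' l.castSucc) (p' l.succ)) + TT f g y1 z1)
          - TT f g (p 0) (q (Fin.last (n+1)))
        = ((∑ l : Fin (n+1), TT f g (p' l) (q' l))
            + (∑ l : Fin n, TT f g (q' l.castSucc) (p' l.succ))
            - TT f g (p' 0) (q' (Fin.last n)))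
          + (TT f g x0 y1 + TT f g y1 z1 - TT f g x0 z1)
          + (TT f g x0 z1 + TT f g z1 w - TT f g x0 w) := by
      rw [hp'0, hq'last]
      ring
    rw [Fin.succ_last, hexpr]
    have hR0 : (0:ℝ) ≤ w - x0 := by linarith
    have hRle : ∀ u : ℝ, x0 ≤ u → u ≤ w → (u - x0) ^ (α+β) ≤ (w - x0) ^ (α+β) :=
      fun u h1 h2 => Real.rpow_le_rpow (by linarith) (by linarith) (by positivity)
    have hB1 : |(∑ l : Fin (n+1), TT f g (p' l) (q' l))
            + (∑ l : Fin n, TT f g (q' l.castSucc) (p' l.succ))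
            - TT f g (p' 0) (q' (Fin.last n))|
        ≤ 2 * (2*(n:ℝ)+1) * (Cf*Cg) * (w - x0) ^ (α+β) := by
      refine hIH.trans ?_
      rw [hp'0, hq'last]
      exact mul_le_mul_of_nonneg_left (hRle y1 hx0y1 (hy1z1.trans hz1w)) (by positivity)
    have hB2 : |TT f g x0 y1 + TT f g y1 z1 - TT f g x0 z1|
        ≤ 2 * (Cf*Cg) * (w - x0) ^ (α+β) :=
      hc1.trans (mul_le_mul_of_nonneg_left (hRle z1 (hx0y1.trans hy1z1) hz1w) (by positivity))
    have hB3 : |TT f g x0 z1 + TT f g z1 w - TT f g x0 w|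
        ≤ 2 * (Cf*Cg) * (w - x0) ^ (α+β) := hc2
    calc |_ + _ + _| ≤ _ := (abs_add_le _ _).trans (add_le_add (abs_add_le _ _) le_rfl)
      _ ≤ (2 * (2*(n:ℝ)+1) * (Cf*Cg) * (w - x0) ^ (α+β))
          + (2 * (Cf*Cg) * (w - x0) ^ (α+β)) + (2 * (Cf*Cg) * (w - x0) ^ (α+β)) :=
        add_le_add (add_le_add hB1 hB2) hB3
      _ = 2 * (2*((n:ℝ)+1)+1) * (Cf*Cg) * (w - x0) ^ (α+β) := by ring
      _ = 2 * (2*((n+1:ℕ):ℝ)+1) * (Cf*Cg) * (q (Fin.last (n+1)) - p 0) ^ (α+β) := by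
        push_cast; rfl

/-- For `f` `α`-Hölder and `g` `β`-Hölder on `K` with `0 < α, β ≤ 1` and
`∑_s r_s^{α+β} < 1`, the pair `(f,g)` is integrable iff the series `∑_{n≥1} ψ_n(f,g)`
converges. -/
theorem integrable_iff_psi_series_converges
    {N : ℕ} (r c : Fin (N + 1) → ℝ)
    (hr0 : ∀ s, 0 < r s) (hr1 : ∀ s, r s < 1)
    (a b : ℝ) (hab : a < b)
    (F : Fin (N + 1) → ℝ → ℝ) (hF : ∀ s x, F s x = r s * x + c s)
    (ha : F 0 a = a) (hb : F (Fin.last N) b = b)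
    (hord : ∀ l : Fin N, F l.castSucc b ≤ F l.succ a)
    (f g : ℝ → ℝ) (α β : ℝ)
    (hα0 : 0 < α) (hα1 : α ≤ 1) (hβ0 : 0 < β) (hβ1 : β ≤ 1)
    (hf : ∃ C : ℝ, ∀ x ∈ ssSet F a b, ∀ y ∈ ssSet F a b, |f x - f y| ≤ C * |x - y| ^ α)
    (hg : ∃ C : ℝ, ∀ x ∈ ssSet F a b, ∀ y ∈ ssSet F a b, |g x - g y| ≤ C * |x - y| ^ β)
    (hdim : ∑ s : Fin (N + 1), r s ^ (α + β) < 1) :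
    (∃ L : ℝ, Tendsto (phiSeq F a b f g) atTop (nhds L)) ↔
      (∃ L : ℝ, Tendsto (fun m => ∑ j ∈ Finset.range m, psiSeq F a b f g j)
        atTop (nhds L)) := by
  classical
  obtain ⟨Cf', hCf'⟩ := hf
  obtain ⟨Cg', hCg'⟩ := hg
  set K := ssSet F a b with hK
  set Cf := |Cf'| with hCfdef
  set Cg := |Cg'| with hCgdef
  have hCf0 : 0 ≤ Cf := abs_nonneg _
  have hCg0 : 0 ≤ Cg := abs_nonneg _
  have hCf : ∀ x ∈ K, ∀ y ∈ K, |f x - f y| ≤ Cf * |x - y| ^ α := fun x hx y hy =>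
    (hCf' x hx y hy).trans
      (mul_le_mul_of_nonneg_right (le_abs_self _) (Real.rpow_nonneg (abs_nonneg _) _))
  have hCg : ∀ x ∈ K, ∀ y ∈ K, |g x - g y| ≤ Cg * |x - y| ^ β := fun x hx y hy =>
    (hCg' x hx y hy).trans
      (mul_le_mul_of_nonneg_right (le_abs_self _) (Real.rpow_nonneg (abs_nonneg _) _))
  have hm : ∀ l, Monotone (F l) := by
    intro l x y hxy
    rw [hF, hF]
    have := (hr0 l).le
    nlinarith
  have haA : ∀ l : Fin (N+1), a ≤ F l a := by
    intro l
    induction l using Fin.induction with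
    | zero => exact ha.ge
    | succ i ih => exact le_trans (le_trans ih (hm _ hab.le)) (hord i)
  have hbB : ∀ l : Fin (N+1), F l b ≤ b := by
    intro l
    induction l using Fin.reverseInduction with
    | last => exact hb.le
    | cast i ih => exact le_trans (hord i) (le_trans (hm _ hab.le) ih)
  have hmemA : ∀ {n : ℕ} (s : Fin n → Fin (N+1)), wmap F s a ∈ K :=
    fun s => mem_ssSet hm haA hbB ⟨le_rfl, hab.le⟩ 0 ha s
  have hmemB : ∀ {n : ℕ} (s : Fin n → Fin (N+1)), wmap F s b ∈ K :=
    fun s => mem_ssSet hm haA hbB ⟨hab.le, le_rfl⟩ (Fin.last N) hb s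
  have hmemFa : ∀ {n : ℕ} (s : Fin n → Fin (N+1)) (l : Fin (N+1)),
      wmap F s (F l a) ∈ K := by
    intro n s l
    rw [← wmap_snoc]
    exact hmemA _
  have hmemFb : ∀ {n : ℕ} (s : Fin n → Fin (N+1)) (l : Fin (N+1)),
      wmap F s (F l b) ∈ K := by
    intro n s l
    rw [← wmap_snoc]
    exact hmemB _
  set ρ := ∑ l : Fin (N+1), r l ^ (α+β) with hρdef
  have hρ0 : 0 ≤ ρ :=
    Finset.sum_nonneg fun l _ => Real.rpow_nonneg (hr0 l).le _
  set D : ℝ := 2 * (2*(N:ℝ)+1) * (Cf*Cg) with hDdef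
  set Cst : ℝ := D * (b-a)^(α+β) with hCstdef
  have hTT : ∀ x y : ℝ, TT f g x y = (f x + f y) * (g y - g x) := fun _ _ => rfl
  -- sum of products identity
  have hρsum : ∀ n : ℕ,
      (∑ s : Fin n → Fin (N+1), ∏ i, r (s i) ^ (α+β)) = ρ ^ n := by
    intro n
    have h := Finset.prod_univ_sum (fun _ : Fin n => (Finset.univ : Finset (Fin (N+1))))
      (fun _ l => r l ^ (α+β))
    rw [Fintype.piFinset_univ] at h
    rw [← h, Finset.prod_const, Finset.card_univ, Fintype.card_fin]
  -- reindexing of phiSeq (n+1)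
  have hphi : ∀ n : ℕ, phiSeq F a b f g (n+1)
      = ∑ s : Fin n → Fin (N+1), ∑ l : Fin (N+1),
          TT f g (wmap F s (F l a)) (wmap F s (F l b)) := by
    intro n
    let e : (Fin n → Fin (N+1)) × Fin (N+1) ≃ (Fin (n+1) → Fin (N+1)) :=
      { toFun := fun p => Fin.snoc p.1 p.2
        invFun := fun t => (Fin.init t, t (Fin.last n))
        left_inv := fun p => by simp
        right_inv := fun t => by simp }
    rw [phiSeq]
    rw [← Equiv.sum_comp e (fun t => (f (wmap F t a) + f (wmap F t b))
      * (g (wmap F t b) - g (wmap F t a)))]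
    rw [Fintype.sum_prod_type]
    refine Finset.sum_congr rfl fun s _ => Finset.sum_congr rfl fun l _ => ?_
    show (f (wmap F (Fin.snoc s l) a) + f (wmap F (Fin.snoc s l) b))
        * (g (wmap F (Fin.snoc s l) b) - g (wmap F (Fin.snoc s l) a)) = _
    rw [wmap_snoc, wmap_snoc, hTT]
  -- the key estimate
  have key : ∀ n : ℕ,
      |phiSeq F a b f g (n+1) + psiSeq F a b f g n - phiSeq F a b f g n| ≤ Cst * ρ^n := by
    intro n
    rw [hphi n, phiSeq, psiSeq]
    rw [← Finset.sum_add_distrib, ← Finset.sum_sub_distrib]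
    refine (Finset.abs_sum_le_sum_abs _ _).trans ?_
    have hterm : ∀ s : Fin n → Fin (N+1),
        |(∑ l : Fin (N+1), TT f g (wmap F s (F l a)) (wmap F s (F l b)))
          + (∑ l : Fin N, (f (wmap F s (F l.castSucc b)) + f (wmap F s (F l.succ a))) *
              (g (wmap F s (F l.succ a)) - g (wmap F s (F l.castSucc b))))
          - (f (wmap F s a) + f (wmap F s b)) * (g (wmap F s b) - g (wmap F s a))|
        ≤ Cst * ∏ i, r (s i) ^ (α+β) := by
      intro s
      have hc := chain_bound K f g α β Cf Cg hα0 hβ0 hCf0 hCg0 hCf hCg N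
        (fun l => wmap F s (F l a)) (fun l => wmap F s (F l b))
        (fun l => hmemFa s l) (fun l => hmemFb s l)
        (fun l => wmap_mono F hm s (hm l hab.le))
        (fun l => wmap_mono F hm s (hord l))
      simp only [ha, hb] at hc
      have hgap : ∀ l : Fin N,
          (f (wmap F s (F l.castSucc b)) + f (wmap F s (F l.succ a))) *
              (g (wmap F s (F l.succ a)) - g (wmap F s (F l.castSucc b)))
          = TT f g (wmap F s (F l.castSucc b)) (wmap F s (F l.succ a)) := fun l => rfl
      simp only [hgap]
      rw [show (f (wmap F s a) + f (wmap F s b)) * (g (wmap F s b) - g (wmap F s a))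
        = TT f g (wmap F s a) (wmap F s b) from rfl]
      refine hc.trans ?_
      have hdiff : wmap F s b - wmap F s a = (∏ i, r (s i)) * (b - a) :=
        wmap_sub r c F hF s a b
      have hprod0 : (0:ℝ) ≤ ∏ i, r (s i) :=
        Finset.prod_nonneg fun i _ => (hr0 _).le
      rw [hdiff, Real.mul_rpow hprod0 (by linarith),
        ← Real.finset_prod_rpow _ _ (fun i _ => (hr0 _).le)]
      rw [hCstdef, hDdef]
      ring_nf
      exact le_refl _
    refine (Finset.sum_le_sum fun s _ => hterm s).trans ?_
    rw [← Finset.mul_sum, hρsum n]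
  -- summability of the defect
  set E : ℕ → ℝ := fun n =>
    phiSeq F a b f g (n+1) + psiSeq F a b f g n - phiSeq F a b f g n with hEdef
  have hgeo : Summable (fun n : ℕ => Cst * ρ^n) :=
    (summable_geometric_of_lt_one hρ0 hdim).mul_left Cst
  have habsE : Summable (fun n => |E n|) :=
    Summable.of_nonneg_of_le (fun n => abs_nonneg _) key hgeo
  have hEsum : Summable E := by
    refine Summable.of_norm ?_
    simpa [Real.norm_eq_abs] using habsE
  obtain ⟨SE, hSE⟩ := hEsum
  have hSEt : Tendsto (fun m => ∑ j ∈ Finset.range m, E j) atTop (𝓝 SE) :=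
    hSE.tendsto_sum_nat
  -- telescoping identity
  have htel : ∀ m : ℕ, phiSeq F a b f g m + ∑ j ∈ Finset.range m, psiSeq F a b f g j
      = phiSeq F a b f g 0 + ∑ j ∈ Finset.range m, E j := by
    intro m
    induction m with
    | zero => simp
    | succ m ih =>
      rw [Finset.sum_range_succ, Finset.sum_range_succ]
      have hEm : E m = phiSeq F a b f g (m+1) + psiSeq F a b f g m - phiSeq F a b f g m :=
        rfl
      linarith
  constructor
  · rintro ⟨L, hL⟩
    refine ⟨phiSeq F a b f g 0 + SE - L, ?_⟩
    have heq : (fun m => ∑ j ∈ Finset.range m, psiSeq F a b f g j)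
        = fun m => (phiSeq F a b f g 0 + ∑ j ∈ Finset.range m, E j) - phiSeq F a b f g m := by
      funext m
      have := htel m
      linarith
    rw [heq]
    exact (tendsto_const_nhds.add hSEt).sub hL
  · rintro ⟨L, hL⟩
    refine ⟨phiSeq F a b f g 0 + SE - L, ?_⟩
    have ht2 : Tendsto (fun m => (phiSeq F a b f g 0 + ∑ j ∈ Finset.range m, E j)
        - ∑ j ∈ Finset.range m, psiSeq F a b f g j) atTop
        (𝓝 (phiSeq F a b f g 0 + SE - L)) :=
      (tendsto_const_nhds.add hSEt).sub hL
    refine ht2.congr fun m => ?_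
    have := htel m
    linarith
end

section
/- Let k ≥ 1 and 0 < p < 1. Then φ_n(1, c_{k,p}) = 2((k+1)p)^n for every n ∈ ℕ. Consequently: if 0 < p < 1/(k+1) the pair (1, c_{k,p}) is integrable with φ(1, c_{k,p}) = 0; if p = 1/(k+1) it is integrable with φ(1, c_{k,p}) = 2; and if 1/(k+1) < p < 1 then φ_n(1, c_{k,p}) → ∞, so the pair is not integrable. -/
open Filter Topology

/-- The point of the `(2k+1)`-adic Cantor set with digit sequence `s`. -/
noncomputable def cval (k : ℕ) (s : ℕ → Fin (k + 1)) : ℝ :=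
  ∑' i : ℕ, 2 * ((s i : ℕ) : ℝ) / (2 * (k : ℝ) + 1) ^ (i + 1)

/-- Extension of a finite word by the digit `0`. -/
def ext0 {k n : ℕ} (s : Fin n → Fin (k + 1)) : ℕ → Fin (k + 1) :=
  fun i => if h : i < n then s ⟨i, h⟩ else 0

/-- Extension of a finite word by the digit `k`. -/
def extK {k n : ℕ} (s : Fin n → Fin (k + 1)) : ℕ → Fin (k + 1) :=
  fun i => if h : i < n then s ⟨i, h⟩ else Fin.last k

/-- The left endpoint `a_s`. -/
noncomputable def aPt {k n : ℕ} (s : Fin n → Fin (k + 1)) : ℝ := cval k (ext0 s)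

/-- The right endpoint `b_s`. -/
noncomputable def bPt {k n : ℕ} (s : Fin n → Fin (k + 1)) : ℝ := cval k (extK s)

/-- `φ_n(f,g) = ∑_{s ∈ S^n} (f(a_s)+f(b_s))·(g(b_s)−g(a_s))` on the `(2k+1)`-adic
Cantor set. -/
noncomputable def phiC (k : ℕ) (f g : ℝ → ℝ) (n : ℕ) : ℝ :=
  ∑ s : Fin n → Fin (k + 1), (f (aPt s) + f (bPt s)) * (g (bPt s) - g (aPt s))

lemma summable_digit (k : ℕ) (p : ℝ) (hp0 : 0 < p) (hp1 : p < 1)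
    (t : ℕ → Fin (k + 1)) : Summable (fun i => ((t i : ℕ) : ℝ) * p ^ i) := by
  have hg : Summable (fun i : ℕ => (k : ℝ) * p ^ i) :=
    (summable_geometric_of_lt_one hp0.le hp1).mul_left _
  have h1 : ∀ i : ℕ, (0 : ℝ) ≤ ((t i : ℕ) : ℝ) * p ^ i := fun i => by positivity
  have h2 : ∀ i : ℕ, ((t i : ℕ) : ℝ) * p ^ i ≤ (k : ℝ) * p ^ i := by
    intro i
    have : ((t i : ℕ) : ℝ) ≤ (k : ℝ) := by
      exact_mod_cast Nat.lt_succ_iff.mp (t i).isLt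
    exact mul_le_mul_of_nonneg_right this (by positivity)
  exact Summable.of_nonneg_of_le h1 h2 hg

lemma cdiff (k : ℕ) (p : ℝ) (hp0 : 0 < p) (hp1 : p < 1)
    {n : ℕ} (s : Fin n → Fin (k + 1)) :
    (∑' i : ℕ, ((extK s i : ℕ) : ℝ) * p ^ i)
      - (∑' i : ℕ, ((ext0 s i : ℕ) : ℝ) * p ^ i)
      = (k : ℝ) * p ^ n / (1 - p) := by
  have hK := summable_digit k p hp0 hp1 (extK s)
  have h0 := summable_digit k p hp0 hp1 (ext0 s)
  rw [← Summable.tsum_sub hK h0]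
  have heq : (fun i => ((extK s i : ℕ) : ℝ) * p ^ i - ((ext0 s i : ℕ) : ℝ) * p ^ i)
      = fun i => if i < n then 0 else (k : ℝ) * p ^ i := by
    funext i
    by_cases h : i < n <;> simp [extK, ext0, h, Fin.last]
  rw [heq]
  have hsum : Summable (fun i : ℕ => if i < n then (0 : ℝ) else (k : ℝ) * p ^ i) := by
    have hg : Summable (fun i : ℕ => (k : ℝ) * p ^ i) :=
      (summable_geometric_of_lt_one hp0.le hp1).mul_left _
    have h1 : ∀ i : ℕ, (0 : ℝ) ≤ if i < n then (0 : ℝ) else (k : ℝ) * p ^ i := by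
      intro i; by_cases h : i < n <;> simp [h] <;> positivity
    have h2 : ∀ i : ℕ, (if i < n then (0 : ℝ) else (k : ℝ) * p ^ i) ≤ (k : ℝ) * p ^ i := by
      intro i; by_cases h : i < n <;> simp [h] <;> positivity
    exact Summable.of_nonneg_of_le h1 h2 hg
  rw [← Summable.sum_add_tsum_nat_add n hsum]
  have h1 : ∑ i ∈ Finset.range n, (if i < n then (0 : ℝ) else (k : ℝ) * p ^ i) = 0 := by
    apply Finset.sum_eq_zero
    intro i hi
    simp [Finset.mem_range.mp hi]
  have h2 : (fun i : ℕ => if i + n < n then (0 : ℝ) else (k : ℝ) * p ^ (i + n))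
      = fun i : ℕ => ((k : ℝ) * p ^ n) * p ^ i := by
    funext i
    simp only [Nat.not_lt.mpr (Nat.le_add_left n i), if_false, pow_add]
    ring
  rw [h1, zero_add, h2, tsum_mul_left, tsum_geometric_of_lt_one hp0.le hp1]
  field_simp

/-- `φ_n(1, c_{k,p}) = 2((k+1)p)^n`; hence `(1, c_{k,p})` is integrable with integral
`0` for `p < 1/(k+1)`, integrable with integral `2` for `p = 1/(k+1)`, and
`φ_n(1, c_{k,p}) → ∞` (so not integrable) for `p > 1/(k+1)`. -/
theorem phi_one_generalizedCantor
    (k : ℕ) (hk : 1 ≤ k) (p : ℝ) (hp0 : 0 < p) (hp1 : p < 1)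
    (c : ℝ → ℝ)
    (hc : ∀ s : ℕ → Fin (k + 1),
      c (cval k s) = ((1 - p) / (k : ℝ)) * ∑' i : ℕ, ((s i : ℕ) : ℝ) * p ^ i) :
    (∀ n : ℕ, phiC k (fun _ => 1) c n = 2 * (((k : ℝ) + 1) * p) ^ n) ∧
    (p < 1 / ((k : ℝ) + 1) → Tendsto (phiC k (fun _ => 1) c) atTop (nhds 0)) ∧
    (p = 1 / ((k : ℝ) + 1) → Tendsto (phiC k (fun _ => 1) c) atTop (nhds 2)) ∧
    (1 / ((k : ℝ) + 1) < p →
      Tendsto (phiC k (fun _ => 1) c) atTop atTop ∧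
      ¬ ∃ L : ℝ, Tendsto (phiC k (fun _ => 1) c) atTop (nhds L)) := by
  have hk0 : (k : ℝ) ≠ 0 := by
    exact_mod_cast Nat.one_le_iff_ne_zero.mp hk
  have hp1' : (1 : ℝ) - p ≠ 0 := by linarith
  have hmain : ∀ n : ℕ, phiC k (fun _ => 1) c n = 2 * (((k : ℝ) + 1) * p) ^ n := by
    intro n
    have hterm : ∀ s : Fin n → Fin (k + 1), c (bPt s) - c (aPt s) = p ^ n := by
      intro s
      rw [bPt, aPt, hc, hc, ← mul_sub, cdiff k p hp0 hp1 s]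
      field_simp
    unfold phiC
    have : ∀ s : Fin n → Fin (k + 1),
        ((1 : ℝ) + 1) * (c (bPt s) - c (aPt s)) = 2 * p ^ n := by
      intro s; rw [hterm s]; ring
    rw [Finset.sum_congr rfl (fun s _ => this s), Finset.sum_const,
      Finset.card_univ]
    simp only [Fintype.card_fun, Fintype.card_fin, nsmul_eq_mul, mul_pow]
    push_cast
    ring
  refine ⟨hmain, ?_, ?_, ?_⟩
  · intro hp
    have h1 : ((k : ℝ) + 1) * p < 1 := by
      have hk1 : (0 : ℝ) < (k : ℝ) + 1 := by positivity
      rw [lt_div_iff₀ hk1] at hp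
      linarith
    have h0 : (0 : ℝ) ≤ ((k : ℝ) + 1) * p := by positivity
    have := (tendsto_pow_atTop_nhds_zero_of_lt_one h0 h1).const_mul 2
    simp only [mul_zero] at this
    exact this.congr (fun n => (hmain n).symm)
  · intro hp
    have h1 : ((k : ℝ) + 1) * p = 1 := by
      rw [hp]; field_simp
    have : ∀ n, phiC k (fun _ => 1) c n = 2 := by
      intro n; rw [hmain n, h1, one_pow, mul_one]
    rw [funext this]
    exact tendsto_const_nhds
  · intro hp
    have h1 : 1 < ((k : ℝ) + 1) * p := by
      have hk1 : (0 : ℝ) < (k : ℝ) + 1 := by positivity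
      rw [div_lt_iff₀ hk1] at hp
      linarith
    have ht : Tendsto (phiC k (fun _ => 1) c) atTop atTop := by
      have := (tendsto_pow_atTop_atTop_of_one_lt h1).const_mul_atTop (by norm_num : (0:ℝ) < 2)
      exact this.congr (fun n => (hmain n).symm)
    exact ⟨ht, fun ⟨L, hL⟩ => not_tendsto_nhds_of_tendsto_atTop ht L hL⟩
end

section
/- Let k ≥ 1 and 0 < p, q < 1. Then φ_n(c_{k,p}, c_{k,q}) = ((k+1)q)^n for every n ∈ ℕ. Consequently: if 0 < q < 1/(k+1) the pair (c_{k,p}, c_{k,q}) is integrable with φ(c_{k,p}, c_{k,q}) = 0; if q = 1/(k+1) it is integrable with φ(c_{k,p}, c_{k,q}) = 1; and if 1/(k+1) < q < 1 then φ_n(c_{k,p}, c_{k,q}) → ∞, so the pair is not integrable. -/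
open Filter Topology

lemma summable_digits {k : ℕ} (d : ℕ → Fin (k + 1)) {p : ℝ} (hp0 : 0 ≤ p) (hp1 : p < 1) :
    Summable (fun i : ℕ => ((d i : ℕ) : ℝ) * p ^ i) := by
  apply Summable.of_nonneg_of_le (fun i => by positivity)
    (fun i => mul_le_mul_of_nonneg_right (by exact_mod_cast Fin.is_le (d i)) (pow_nonneg hp0 i))
    ((summable_geometric_of_lt_one hp0 hp1).mul_left (k : ℝ))

lemma tsum_ext0 {k n : ℕ} (s : Fin n → Fin (k + 1)) (p : ℝ) :
    ∑' i : ℕ, ((ext0 s i : ℕ) : ℝ) * p ^ i = ∑ i : Fin n, ((s i : ℕ) : ℝ) * p ^ (i : ℕ) := by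
  rw [tsum_eq_sum (s := Finset.range n) ?_]
  · rw [← Fin.sum_univ_eq_sum_range (fun i => ((ext0 s i : ℕ) : ℝ) * p ^ i) n]
    exact Finset.sum_congr rfl fun i _ => by simp [ext0, i.isLt]
  · intro b hb
    simp only [Finset.mem_range, not_lt] at hb
    rw [ext0, dif_neg (Nat.not_lt.2 hb)]
    simp

lemma tsum_extK {k n : ℕ} (s : Fin n → Fin (k + 1)) {p : ℝ} (hp0 : 0 ≤ p) (hp1 : p < 1) :
    ∑' i : ℕ, ((extK s i : ℕ) : ℝ) * p ^ i
      = (∑ i : Fin n, ((s i : ℕ) : ℝ) * p ^ (i : ℕ)) + (k : ℝ) * p ^ n * (1 - p)⁻¹ := by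
  have hs := summable_digits (extK s) hp0 hp1
  rw [← Summable.sum_add_tsum_nat_add n hs]
  congr 1
  · rw [← Fin.sum_univ_eq_sum_range (fun i => ((extK s i : ℕ) : ℝ) * p ^ i) n]
    exact Finset.sum_congr rfl fun i _ => by simp [extK, i.isLt]
  · have h1 : ∀ i : ℕ, ((extK s (i + n) : ℕ) : ℝ) * p ^ (i + n) = ((k : ℝ) * p ^ n) * p ^ i := by
      intro i
      rw [extK, dif_neg (by omega)]
      simp [pow_add]
      ring
    rw [tsum_congr h1, tsum_mul_left, tsum_geometric_of_lt_one hp0 hp1]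

lemma sum_coord {k n : ℕ} (j : Fin n) (F : Fin (k + 1) → ℝ) :
    ∑ s : Fin n → Fin (k + 1), F (s j) = ((k : ℝ) + 1) ^ (n - 1) * ∑ v : Fin (k + 1), F v := by
  rw [← Equiv.sum_comp (Equiv.piSplitAt j (fun _ => Fin (k + 1))).symm
      (fun s : Fin n → Fin (k + 1) => F (s j))]
  simp only [Equiv.piSplitAt_symm_apply, dif_pos]
  rw [Fintype.sum_prod_type]
  simp only [Finset.sum_const, smul_eq_mul, Finset.card_univ, Fintype.card_fun]
  have hcard : Fintype.card {i : Fin n // i ≠ j} = n - 1 := by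
    rw [Fintype.card_subtype_compl]
    simp
  rw [hcard, Finset.mul_sum]
  exact Finset.sum_congr rfl fun v _ => by push_cast [nsmul_eq_mul, Fintype.card_fin]; ring

/-- `φ_n(c_{k,p}, c_{k,q}) = ((k+1)q)^n`; hence `(c_{k,p}, c_{k,q})` is integrable
with integral `0` for `q < 1/(k+1)`, integrable with integral `1` for `q = 1/(k+1)`,
and `φ_n → ∞` (so not integrable) for `q > 1/(k+1)`. -/
theorem phi_generalizedCantor_pair
    (k : ℕ) (hk : 1 ≤ k) (p q : ℝ) (hp0 : 0 < p) (hp1 : p < 1) (hq0 : 0 < q) (hq1 : q < 1)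
    (cp cq : ℝ → ℝ)
    (hcp : ∀ s : ℕ → Fin (k + 1),
      cp (cval k s) = ((1 - p) / (k : ℝ)) * ∑' i : ℕ, ((s i : ℕ) : ℝ) * p ^ i)
    (hcq : ∀ s : ℕ → Fin (k + 1),
      cq (cval k s) = ((1 - q) / (k : ℝ)) * ∑' i : ℕ, ((s i : ℕ) : ℝ) * q ^ i) :
    (∀ n : ℕ, phiC k cp cq n = (((k : ℝ) + 1) * q) ^ n) ∧
    (q < 1 / ((k : ℝ) + 1) → Tendsto (phiC k cp cq) atTop (nhds 0)) ∧
    (q = 1 / ((k : ℝ) + 1) → Tendsto (phiC k cp cq) atTop (nhds 1)) ∧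
    (1 / ((k : ℝ) + 1) < q →
      Tendsto (phiC k cp cq) atTop atTop ∧
      ¬ ∃ L : ℝ, Tendsto (phiC k cp cq) atTop (nhds L)) := by
  have hkpos : (0 : ℝ) < k := by exact_mod_cast hk
  have hk0 : (k : ℝ) ≠ 0 := ne_of_gt hkpos
  have hp1' : (1 : ℝ) - p ≠ 0 := by linarith
  have hq1' : (1 : ℝ) - q ≠ 0 := by linarith
  have hk1 : (0 : ℝ) < (k : ℝ) + 1 := by linarith
  have key : ∀ n : ℕ, phiC k cp cq n = (((k : ℝ) + 1) * q) ^ n := by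
    intro n
    have hterm : ∀ s : Fin n → Fin (k + 1),
        (cp (aPt s) + cp (bPt s)) * (cq (bPt s) - cq (aPt s))
          = (2 * ((1 - p) / (k : ℝ)) * (∑ i : Fin n, ((s i : ℕ) : ℝ) * p ^ (i : ℕ)) + p ^ n)
              * q ^ n := by
      intro s
      have ha := hcp (ext0 s)
      have hb := hcp (extK s)
      have hqa := hcq (ext0 s)
      have hqb := hcq (extK s)
      rw [tsum_ext0 s p] at ha
      rw [tsum_extK s hp0.le hp1] at hb
      rw [tsum_ext0 s q] at hqa
      rw [tsum_extK s hq0.le hq1] at hqb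
      show (cp (cval k (ext0 s)) + cp (cval k (extK s)))
          * (cq (cval k (extK s)) - cq (cval k (ext0 s))) = _
      rw [ha, hb, hqa, hqb]
      field_simp
      ring
    have step1 : phiC k cp cq n
        = (2 * ((1 - p) / (k : ℝ))
            * (∑ s : Fin n → Fin (k + 1), ∑ i : Fin n, ((s i : ℕ) : ℝ) * p ^ (i : ℕ))
          + ((k : ℝ) + 1) ^ n * p ^ n) * q ^ n := by
      rw [phiC, Finset.sum_congr rfl (fun s _ => hterm s), ← Finset.sum_mul]
      congr 1
      rw [Finset.sum_add_distrib, Finset.sum_const, Finset.mul_sum, ← Finset.mul_sum]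
      congr 1
      simp [nsmul_eq_mul, Fintype.card_fun]
    have hS : (∑ v : Fin (k + 1), ((v : ℕ) : ℝ)) = (k : ℝ) * ((k : ℝ) + 1) / 2 := by
      rw [Fin.sum_univ_eq_sum_range (fun i => ((i : ℕ) : ℝ)) (k + 1)]
      have h := Finset.sum_range_id_mul_two (k + 1)
      rw [Nat.add_sub_cancel] at h
      have h2 : ((∑ i ∈ Finset.range (k + 1), i : ℕ) : ℝ) * 2 = ((k : ℝ) + 1) * k := by
        exact_mod_cast h
      rw [Nat.cast_sum] at h2
      linarith
    have hsum : (∑ s : Fin n → Fin (k + 1), ∑ i : Fin n, ((s i : ℕ) : ℝ) * p ^ (i : ℕ))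
        = ((k : ℝ) + 1) ^ (n - 1) * ((k : ℝ) * ((k : ℝ) + 1) / 2)
            * ∑ i ∈ Finset.range n, p ^ i := by
      rw [Finset.sum_comm]
      have hco : ∀ i : Fin n, (∑ s : Fin n → Fin (k + 1), ((s i : ℕ) : ℝ) * p ^ (i : ℕ))
          = ((k : ℝ) + 1) ^ (n - 1) * ((k : ℝ) * ((k : ℝ) + 1) / 2) * p ^ (i : ℕ) := by
        intro i
        rw [sum_coord i (fun v => ((v : ℕ) : ℝ) * p ^ (i : ℕ)), ← Finset.sum_mul, hS]
        ring
      rw [Finset.sum_congr rfl (fun i _ => hco i), ← Finset.mul_sum,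
        Fin.sum_univ_eq_sum_range (fun i => p ^ i) n]
    have hG : (1 - p) * ∑ i ∈ Finset.range n, p ^ i = 1 - p ^ n := by
      have h := geom_sum_mul p n
      have e : (1 - p) * ∑ i ∈ Finset.range n, p ^ i
          = -((∑ i ∈ Finset.range n, p ^ i) * (p - 1)) := by ring
      rw [e, h]
      ring
    have hpow : ((k : ℝ) + 1) ^ (n - 1) * ((k : ℝ) + 1) * (1 - p ^ n)
        = ((k : ℝ) + 1) ^ n * (1 - p ^ n) := by
      cases n with
      | zero => simp
      | succ m => rw [Nat.succ_sub_one, ← pow_succ]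
    have hmain : 2 * ((1 - p) / (k : ℝ))
          * (((k : ℝ) + 1) ^ (n - 1) * ((k : ℝ) * ((k : ℝ) + 1) / 2)
              * ∑ i ∈ Finset.range n, p ^ i)
        + ((k : ℝ) + 1) ^ n * p ^ n = ((k : ℝ) + 1) ^ n := by
      have e1 : 2 * ((1 - p) / (k : ℝ))
            * (((k : ℝ) + 1) ^ (n - 1) * ((k : ℝ) * ((k : ℝ) + 1) / 2)
                * ∑ i ∈ Finset.range n, p ^ i)
          = ((k : ℝ) + 1) ^ (n - 1) * ((k : ℝ) + 1)
              * ((1 - p) * ∑ i ∈ Finset.range n, p ^ i) := by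
        field_simp
      rw [e1, hG, hpow]
      ring
    rw [step1, hsum, hmain, mul_pow]
  refine ⟨key, ?_, ?_, ?_⟩
  · intro hq
    have hr1 : ((k : ℝ) + 1) * q < 1 := by
      rw [lt_div_iff₀ hk1] at hq
      linarith
    have hr0 : (0 : ℝ) ≤ ((k : ℝ) + 1) * q := by positivity
    have := tendsto_pow_atTop_nhds_zero_of_lt_one hr0 hr1
    simpa [funext key] using this
  · intro hq
    have hr : ((k : ℝ) + 1) * q = 1 := by
      rw [hq]
      field_simp
    have : phiC k cp cq = fun _ : ℕ => (1 : ℝ) := by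
      funext n
      rw [key n, hr, one_pow]
    rw [this]
    exact tendsto_const_nhds
  · intro hq
    have hr : 1 < ((k : ℝ) + 1) * q := by
      rw [div_lt_iff₀ hk1] at hq
      linarith
    have htop : Tendsto (phiC k cp cq) atTop atTop := by
      have := tendsto_pow_atTop_atTop_of_one_lt hr
      simpa [funext key] using this
    refine ⟨htop, ?_⟩
    rintro ⟨L, hL⟩
    exact not_tendsto_nhds_of_tendsto_atTop htop L hL
end

section
/- For any functions f, g : K → ℝ and any n ∈ ℕ, one has φ_n(1, f·g) = φ_n(f, g) + φ_n(g, f). Consequently, if two of the three pairs (1, f·g), (f, g), (g, f) are integrable on K, then so is the third, and φ(1, f·g) = φ(f, g) + φ(g, f). -/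
/-! The identity holds term by term:
`2 (f(y) g(y) - f(x) g(x)) = (f(x) + f(y)) (g(y) - g(x)) + (g(x) + g(y)) (f(y) - f(x))`;
the limit statements follow by adding or subtracting limits. -/

open Filter Topology

theorem phiSeq_one_mul {N : ℕ} (F : Fin (N + 1) → ℝ → ℝ) (a b : ℝ) (f g : ℝ → ℝ) :
    phiSeq F a b (fun _ => 1) (fun x => f x * g x) =
      phiSeq F a b f g + phiSeq F a b g f := by
  funext n
  simp only [phiSeq, Pi.add_apply, ← Finset.sum_add_distrib]
  exact Finset.sum_congr rfl fun _ _ => by ring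

theorem integration_by_parts_general
    {N : ℕ}
    (a b : ℝ)
    (F : Fin (N + 1) → ℝ → ℝ)
    (f g : ℝ → ℝ) :
    (∀ n : ℕ, phiSeq F a b (fun _ => 1) (fun x => f x * g x) n =
      phiSeq F a b f g n + phiSeq F a b g f n) ∧
    (∀ L₁ L₂ : ℝ, Tendsto (phiSeq F a b f g) atTop (nhds L₁) →
      Tendsto (phiSeq F a b g f) atTop (nhds L₂) →
      Tendsto (phiSeq F a b (fun _ => 1) (fun x => f x * g x)) atTop (nhds (L₁ + L₂))) ∧
    (∀ L₁ L₃ : ℝ, Tendsto (phiSeq F a b f g) atTop (nhds L₁) →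
      Tendsto (phiSeq F a b (fun _ => 1) (fun x => f x * g x)) atTop (nhds L₃) →
      Tendsto (phiSeq F a b g f) atTop (nhds (L₃ - L₁))) ∧
    (∀ L₂ L₃ : ℝ, Tendsto (phiSeq F a b g f) atTop (nhds L₂) →
      Tendsto (phiSeq F a b (fun _ => 1) (fun x => f x * g x)) atTop (nhds L₃) →
      Tendsto (phiSeq F a b f g) atTop (nhds (L₃ - L₂))) := by
  rw [phiSeq_one_mul]
  refine ⟨fun n => rfl, fun _ _ h₁ h₂ => h₁.add h₂, fun _ _ h₁ h₃ => ?_, fun _ _ h₂ h₃ => ?_⟩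
  · exact (h₃.sub h₁).congr fun n => add_sub_cancel_left _ _
  · exact (h₃.sub h₂).congr fun n => add_sub_cancel_right _ _

/-- Integration by parts: `φ_n(1, f·g) = φ_n(f,g) + φ_n(g,f)` for all `n`; hence if
two of the three pairs `(1, f·g)`, `(f,g)`, `(g,f)` are integrable then so is the
third, and `φ(1, f·g) = φ(f,g) + φ(g,f)`. -/
theorem integration_by_parts
    {N : ℕ} (r c : Fin (N + 1) → ℝ)
    (hr0 : ∀ s, 0 < r s) (hr1 : ∀ s, r s < 1)
    (a b : ℝ) (hab : a < b)
    (F : Fin (N + 1) → ℝ → ℝ) (hF : ∀ s x, F s x = r s * x + c s)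
    (ha : F 0 a = a) (hb : F (Fin.last N) b = b)
    (hord : ∀ l : Fin N, F l.castSucc b ≤ F l.succ a)
    (f g : ℝ → ℝ) :
    (∀ n : ℕ, phiSeq F a b (fun _ => 1) (fun x => f x * g x) n =
      phiSeq F a b f g n + phiSeq F a b g f n) ∧
    (∀ L₁ L₂ : ℝ, Tendsto (phiSeq F a b f g) atTop (nhds L₁) →
      Tendsto (phiSeq F a b g f) atTop (nhds L₂) →
      Tendsto (phiSeq F a b (fun _ => 1) (fun x => f x * g x)) atTop (nhds (L₁ + L₂))) ∧
    (∀ L₁ L₃ : ℝ, Tendsto (phiSeq F a b f g) atTop (nhds L₁) →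
      Tendsto (phiSeq F a b (fun _ => 1) (fun x => f x * g x)) atTop (nhds L₃) →
      Tendsto (phiSeq F a b g f) atTop (nhds (L₃ - L₁))) ∧
    (∀ L₂ L₃ : ℝ, Tendsto (phiSeq F a b g f) atTop (nhds L₂) →
      Tendsto (phiSeq F a b (fun _ => 1) (fun x => f x * g x)) atTop (nhds L₃) →
      Tendsto (phiSeq F a b f g) atTop (nhds (L₃ - L₂))) :=
  integration_by_parts_general a b F f g
end

section
/- For every integer k ≥ 1 and 0 < p < 1, the generalized Cantor function c_{k,p} is log_{2k+1}(p^{−1})-Hölder continuous on CS_k with constant p^{−1}: for all x, y ∈ CS_k, |c_{k,p}(x) − c_{k,p}(y)| ≤ p^{−1}·|x − y|^{log_{2k+1}(p^{−1})}. -/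
open Finset

/-- The generalized Cantor function `c_{k,p}` is `log_{2k+1}(p⁻¹)`-Hölder on `CS_k`
with constant `p⁻¹`: for all `x, y ∈ CS_k`,
`|c_{k,p}(x) − c_{k,p}(y)| ≤ p⁻¹·|x − y|^{log_{2k+1}(p⁻¹)}`. -/
theorem generalizedCantor_holder
    (k : ℕ) (hk : 1 ≤ k) (p : ℝ) (hp0 : 0 < p) (hp1 : p < 1)
    (c : ℝ → ℝ)
    (hc : ∀ s : ℕ → Fin (k + 1),
      c (cval k s) = ((1 - p) / (k : ℝ)) * ∑' i : ℕ, ((s i : ℕ) : ℝ) * p ^ i) :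
    ∀ s t : ℕ → Fin (k + 1),
      |c (cval k s) - c (cval k t)| ≤
        p⁻¹ * |cval k s - cval k t| ^ Real.logb (2 * (k : ℝ) + 1) p⁻¹ := by
  intro s t
  by_cases hst : s = t
  · subst hst
    rw [sub_self, abs_zero]
    exact mul_nonneg (inv_nonneg.mpr hp0.le) (Real.rpow_nonneg (abs_nonneg _) _)
  set b : ℝ := 2 * (k : ℝ) + 1 with hbdef
  have hk1 : (1:ℝ) ≤ (k:ℝ) := by exact_mod_cast hk
  have hk0 : (0:ℝ) < (k:ℝ) := by linarith
  have hb3 : (3:ℝ) ≤ b := by rw [hbdef]; linarith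
  have hb1 : (1:ℝ) < b := by linarith
  have hb0 : (0:ℝ) < b := by linarith
  have hbinv1 : (1/b) < 1 := by rw [div_lt_one hb0]; linarith
  have hbinv0 : (0:ℝ) ≤ 1/b := by positivity
  have hdig : ∀ (u : ℕ → Fin (k+1)) (i : ℕ), ((u i : ℕ) : ℝ) ≤ (k:ℝ) := by
    intro u i
    exact_mod_cast Nat.le_of_lt_succ (u i).isLt
  -- summability of the Cantor-point series
  have hsumc : ∀ u : ℕ → Fin (k+1), Summable (fun i => 2 * ((u i : ℕ):ℝ) / b ^ (i+1)) := by
    intro u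
    refine Summable.of_nonneg_of_le (fun i => by positivity) (fun i => ?_)
      ((summable_geometric_of_lt_one hbinv0 hbinv1).mul_left (2*(k:ℝ)/b))
    have h1 : (2*(k:ℝ)/b) * (1/b)^i = 2*(k:ℝ)/b^(i+1) := by
      rw [div_pow, one_pow, pow_succ]
      field_simp
    rw [h1]
    have := hdig u i
    gcongr <;> linarith
  -- summability of the value series
  have hsump : ∀ u : ℕ → Fin (k+1), Summable (fun i => ((u i : ℕ):ℝ) * p ^ i) := by
    intro u
    refine Summable.of_nonneg_of_le (fun i => by positivity) (fun i => ?_)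
      ((summable_geometric_of_lt_one hp0.le hp1).mul_left (k:ℝ))
    exact mul_le_mul_of_nonneg_right (hdig u i) (by positivity)
  -- first index of disagreement
  have hne : ∃ n, s n ≠ t n := Function.ne_iff.mp hst
  obtain ⟨n, hn, hlt⟩ : ∃ n, s n ≠ t n ∧ ∀ i, i < n → s i = t i :=
    ⟨Nat.find hne, Nat.find_spec hne, fun i hi => not_not.mp (Nat.find_min hne hi)⟩
  -- the difference digit sequence
  set d : ℕ → ℝ := fun i => ((s i : ℕ):ℝ) - ((t i : ℕ):ℝ) with hddef
  have hd0 : ∀ i, i < n → d i = 0 := by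
    intro i hi; simp [hddef, hlt i hi]
  have hdabs : ∀ i, |d i| ≤ (k:ℝ) := by
    intro i
    rw [abs_sub_le_iff]
    constructor
    · have h1 := hdig s i
      have h2 : (0:ℝ) ≤ ((t i : ℕ):ℝ) := by positivity
      linarith
    · have h1 := hdig t i
      have h2 : (0:ℝ) ≤ ((s i : ℕ):ℝ) := by positivity
      linarith
  have hdn : 1 ≤ |d n| := by
    have hne' : (s n : ℕ) ≠ (t n : ℕ) := fun h => hn (Fin.ext h)
    rcases lt_or_gt_of_ne hne' with h | h
    · have h' : ((s n:ℕ):ℝ) + 1 ≤ ((t n:ℕ):ℝ) := by exact_mod_cast h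
      simp only [hddef]
      rw [abs_sub_comm, abs_of_nonneg (by linarith)]
      linarith
    · have h' : ((t n:ℕ):ℝ) + 1 ≤ ((s n:ℕ):ℝ) := by exact_mod_cast h
      simp only [hddef]
      rw [abs_of_nonneg (by linarith)]
      linarith
  ---- Bound A : |c x - c y| ≤ p ^ n
  have hA : |c (cval k s) - c (cval k t)| ≤ p ^ n := by
    have hsub : c (cval k s) - c (cval k t) = ((1-p)/(k:ℝ)) * ∑' i, d i * p ^ i := by
      rw [hc s, hc t, ← mul_sub, ← Summable.tsum_sub (hsump s) (hsump t)]
      congr 1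
      apply tsum_congr
      intro i
      simp only [hddef]; ring
    have habs_sum : Summable (fun i => |d i * p ^ i|) := by
      refine Summable.of_nonneg_of_le (fun i => abs_nonneg _) (fun i => ?_)
        ((summable_geometric_of_lt_one hp0.le hp1).mul_left (k:ℝ))
      rw [abs_mul, abs_pow, abs_of_pos hp0]
      exact mul_le_mul_of_nonneg_right (hdabs i) (by positivity)
    have hg : Summable (fun i => (k:ℝ) * p ^ (i + n)) := by
      refine Summable.of_nonneg_of_le (fun i => by positivity) (fun i => ?_)
        ((summable_geometric_of_lt_one hp0.le hp1).mul_left ((k:ℝ) * p ^ n))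
      rw [pow_add, mul_comm (p^i), ← mul_assoc]
    have hsum_bound : ∑' i, |d i * p ^ i| ≤ (k:ℝ) * p ^ n * (1-p)⁻¹ := by
      rw [← Summable.sum_add_tsum_nat_add n habs_sum]
      have h0 : ∑ i ∈ range n, |d i * p ^ i| = 0 := by
        apply Finset.sum_eq_zero
        intro i hi
        rw [hd0 i (mem_range.mp hi)]
        simp
      rw [h0, zero_add]
      have htail_sum : Summable fun i => |d (i+n) * p ^ (i+n)| := by
        refine Summable.of_nonneg_of_le (fun i => abs_nonneg _) (fun i => ?_) hg
        rw [abs_mul, abs_pow, abs_of_pos hp0]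
        exact mul_le_mul_of_nonneg_right (hdabs _) (by positivity)
      calc ∑' i, |d (i + n) * p ^ (i + n)| ≤ ∑' i, (k:ℝ) * p ^ (i + n) := by
            apply Summable.tsum_le_tsum _ htail_sum hg
            intro i
            rw [abs_mul, abs_pow, abs_of_pos hp0]
            exact mul_le_mul_of_nonneg_right (hdabs _) (by positivity)
        _ = (k:ℝ) * p ^ n * (1-p)⁻¹ := by
            have he : (fun i : ℕ => (k:ℝ) * p ^ (i + n)) = fun i : ℕ => ((k:ℝ) * p ^ n) * p ^ i := by
              funext i; rw [pow_add]; ring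
            rw [he, tsum_mul_left, tsum_geometric_of_lt_one hp0.le hp1]
    rw [hsub, abs_mul]
    have h1p : (0:ℝ) < 1 - p := by linarith
    rw [abs_of_pos (by positivity : (0:ℝ) < (1-p)/(k:ℝ))]
    have habs_tsum : |∑' i, d i * p ^ i| ≤ ∑' i, |d i * p ^ i| := by
      have h := norm_tsum_le_tsum_norm (f := fun i => d i * p ^ i)
        (by simpa only [Real.norm_eq_abs] using habs_sum)
      simpa only [Real.norm_eq_abs] using h
    calc (1-p)/(k:ℝ) * |∑' i, d i * p ^ i|
        ≤ (1-p)/(k:ℝ) * ((k:ℝ) * p ^ n * (1-p)⁻¹) := by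
          apply mul_le_mul_of_nonneg_left _ (by positivity)
          exact le_trans habs_tsum hsum_bound
      _ = p ^ n := by field_simp
  ---- Bound B : (1/b) ^ (n+1) ≤ |x - y|
  have hB : (1/b) ^ (n+1) ≤ |cval k s - cval k t| := by
    set e : ℕ → ℝ := fun i => 2 * d i / b ^ (i+1) with hedef
    have hesum : Summable e := by
      apply ((hsumc s).sub (hsumc t)).congr
      intro i
      simp only [hedef, hddef]
      ring
    have hxy : cval k s - cval k t = ∑' i, e i := by
      rw [cval, cval, ← hbdef, ← Summable.tsum_sub (hsumc s) (hsumc t)]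
      apply tsum_congr
      intro i
      simp only [hedef, hddef]
      ring
    have hsplit : ∑' i, e i = e n + ∑' i, e (i + 1 + n) := by
      rw [← Summable.sum_add_tsum_nat_add n hesum]
      have h0 : ∑ i ∈ range n, e i = 0 := by
        apply Finset.sum_eq_zero
        intro i hi
        simp only [hedef]
        rw [hd0 i (mem_range.mp hi)]
        simp
      rw [h0, zero_add, Summable.tsum_eq_zero_add ((summable_nat_add_iff n).mpr hesum)]
      simp only [zero_add]
    -- term bound for the tail
    have hterm : ∀ i : ℕ, |e (i + 1 + n)| ≤ (2*(k:ℝ)*(1/b)^(n+2)) * (1/b)^i := by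
      intro i
      simp only [hedef]
      rw [abs_div, abs_of_pos (pow_pos hb0 _), abs_mul, abs_two]
      have hkey : (2*(k:ℝ)*(1/b)^(n+2)) * (1/b)^i = 2*(k:ℝ)/b^(i+1+n+1) := by
        rw [div_pow, div_pow, one_pow, one_pow]
        rw [show i+1+n+1 = (n+2)+i by ring, pow_add]
        field_simp
        ring
      rw [hkey, div_le_div_iff₀ (pow_pos hb0 _) (pow_pos hb0 _)]
      have := hdabs (i+1+n)
      nlinarith [pow_pos hb0 (i+1+n+1)]
    have htail_abs : Summable (fun i => |e (i + 1 + n)|) := by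
      refine Summable.of_nonneg_of_le (fun i => abs_nonneg _) hterm
        ((summable_geometric_of_lt_one hbinv0 hbinv1).mul_left _)
    have htail : |∑' i, e (i + 1 + n)| ≤ (1/b)^(n+1) := by
      have h1 : |∑' i, e (i + 1 + n)| ≤ ∑' i, |e (i + 1 + n)| := by
        have h := norm_tsum_le_tsum_norm (f := fun i => e (i + 1 + n))
          (by simpa only [Real.norm_eq_abs] using htail_abs)
        simpa only [Real.norm_eq_abs] using h
      have h2 : ∑' i, |e (i + 1 + n)| ≤ ∑' i : ℕ, (2*(k:ℝ)*(1/b)^(n+2)) * (1/b)^i :=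
        Summable.tsum_le_tsum hterm htail_abs ((summable_geometric_of_lt_one hbinv0 hbinv1).mul_left _)
      have h3 : ∑' i : ℕ, (2*(k:ℝ)*(1/b)^(n+2)) * (1/b)^i = (1/b)^(n+1) := by
        rw [tsum_mul_left, tsum_geometric_of_lt_one hbinv0 hbinv1]
        have hb' : (1:ℝ) - 1/b = 2*(k:ℝ)/b := by
          rw [hbdef]; field_simp; ring
        rw [hb']
        field_simp
        rw [show n+2 = (n+1)+1 by ring, pow_succ, mul_comm, mul_assoc, one_div, inv_mul_cancel₀ hb0.ne', mul_one]
      linarith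
    -- first term lower bound
    have hen : 2 * (1/b)^(n+1) ≤ |e n| := by
      simp only [hedef]
      rw [abs_div, abs_of_pos (pow_pos hb0 _), abs_mul, abs_two]
      have hbn : (0:ℝ) < b^(n+1) := pow_pos hb0 _
      rw [div_pow, one_pow, mul_one_div, div_le_div_iff₀ hbn hbn]
      nlinarith [hdn, hbn]
    have habs_ineq : |e n| - |∑' i, e (i + 1 + n)| ≤ |e n + ∑' i, e (i + 1 + n)| := by
      have := abs_add_le (e n + ∑' i, e (i + 1 + n)) (-(∑' i, e (i + 1 + n)))
      simp only [add_neg_cancel_right, abs_neg] at this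
      linarith
    rw [hxy, hsplit]
    have : (1/b)^(n+1) ≤ |e n| - |∑' i, e (i + 1 + n)| := by
      have h2 : 2 * (1/b)^(n+1) - (1/b)^(n+1) = (1/b)^(n+1) := by ring
      linarith
    linarith
  ---- combine
  set α := Real.logb b p⁻¹ with hαdef
  have hpinv1 : (1:ℝ) ≤ p⁻¹ := one_le_inv_iff₀.mpr ⟨hp0, hp1.le⟩
  have hα0 : 0 ≤ α := Real.logb_nonneg hb1 hpinv1
  have hbα : b ^ α = p⁻¹ := Real.rpow_logb hb0 (ne_of_gt hb1) (inv_pos.mpr hp0)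
  have h1bα : (1/b) ^ α = p := by
    rw [one_div, Real.inv_rpow hb0.le, hbα, inv_inv]
  have hpow : ((1/b)^(n+1) : ℝ) ^ α = p ^ (n+1) := by
    rw [← Real.rpow_natCast (1/b) (n+1), ← Real.rpow_mul hbinv0, mul_comm,
      Real.rpow_mul hbinv0, h1bα, Real.rpow_natCast]
  have hmono : ((1/b)^(n+1) : ℝ) ^ α ≤ |cval k s - cval k t| ^ α :=
    Real.rpow_le_rpow (by positivity) hB hα0
  calc |c (cval k s) - c (cval k t)| ≤ p ^ n := hA
    _ = p⁻¹ * p ^ (n+1) := by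
        rw [pow_succ, ← mul_assoc, mul_comm p⁻¹ (p^n), mul_assoc,
          inv_mul_cancel₀ hp0.ne', mul_one]
    _ = p⁻¹ * ((1/b)^(n+1) : ℝ) ^ α := by rw [hpow]
    _ ≤ p⁻¹ * |cval k s - cval k t| ^ α :=
        mul_le_mul_of_nonneg_left hmono (inv_nonneg.mpr hp0.le)
end

section
/- On the 5-adic Cantor set CS_2, let ρ be the transposition of {0,1,2} swapping 1 and 2, let T_ρ : CS_2 → CS_2 be defined by T_ρ(∑_{i≥1} 2 s_i/5^i) = ∑_{i≥1} 2 ρ(s_i)/5^i, and let h : CS_2 → ℝ be defined by h(∑_{i≥1} 2 s_i/5^i) = ∑_{i≥1} (−1)^{s_i}·s_i/3^i. Then φ_n(1, h) = 2 and φ_n(1∘T_ρ, h∘T_ρ) = −1 for every n ∈ ℕ; hence both pairs are integrable with φ(1, h) = 2 and φ(1∘T_ρ, h∘T_ρ) = −1, so φ(1∘T_ρ, h∘T_ρ) = −(1/2)·φ(1, h), and in particular integration by substitution with a fixed sign fails for the permutation ρ. -/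
open Filter Topology

/-- The transposition of `{0,1,2}` swapping `1` and `2`. -/
def rho : Fin (2 + 1) → Fin (2 + 1) := ![0, 2, 1]

noncomputable def hF (s : ℕ → Fin (2 + 1)) (i : ℕ) : ℝ :=
  (-1 : ℝ) ^ ((s i : ℕ)) * ((s i : ℕ) : ℝ) / 3 ^ (i + 1)

lemma hF_summable (s : ℕ → Fin (2 + 1)) : Summable (hF s) := by
  apply Summable.of_abs
  refine Summable.of_nonneg_of_le (fun i => abs_nonneg _) (fun i => ?_)
    ((summable_geometric_of_lt_one (by norm_num) (by norm_num : (1:ℝ)/3 < 1)).mul_left 2)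
  unfold hF
  rw [abs_div, abs_of_nonneg (by positivity : (0:ℝ) ≤ 3 ^ (i+1)),
    div_le_iff₀ (by positivity)]
  have hnum : |(-1:ℝ) ^ ((s i : ℕ)) * ((s i : ℕ) : ℝ)| ≤ 2 := by
    rw [abs_mul, abs_pow, abs_neg, abs_one, one_pow, one_mul,
      abs_of_nonneg (by positivity)]
    exact_mod_cast Nat.lt_succ_iff.mp (s i).isLt
  have : (2:ℝ) * (1/3) ^ i * 3 ^ (i+1) = 6 := by
    rw [pow_succ, ← mul_assoc, mul_assoc 2, ← mul_pow]; norm_num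
  rw [this]
  linarith

lemma tail_sum (c : ℝ) (n : ℕ) :
    ∑' i : ℕ, (if i < n then (0:ℝ) else c / 3 ^ (i + 1)) = c / 2 / 3 ^ n := by
  have hinj : Function.Injective (fun i : ℕ => i + n) := fun a b hab => by
    simpa using hab
  rw [← hinj.tsum_eq (f := fun i => if i < n then (0:ℝ) else c / 3 ^ (i + 1))
    (fun x hx => ?_)]
  · have he : ∀ i : ℕ, (if i + n < n then (0:ℝ) else c / 3 ^ (i + n + 1))
        = (c / 3 ^ (n+1)) * (1/3) ^ i := by
      intro i
      rw [if_neg (by omega)]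
      rw [show i + n + 1 = (n + 1) + i by omega, pow_add, div_pow, one_pow]
      field_simp
    rw [tsum_congr he, tsum_mul_left,
      tsum_geometric_of_lt_one (by norm_num) (by norm_num : (1:ℝ)/3 < 1)]
    rw [pow_succ]
    field_simp
    ring
  · simp only [Function.mem_support] at hx
    have hxn : ¬ x < n := fun hlt => hx (if_pos hlt)
    exact ⟨x - n, by simp; omega⟩

lemma diff_plain {n : ℕ} (w : Fin n → Fin (2 + 1)) :
    (∑' i, hF (extK w) i) - ∑' i, hF (ext0 w) i = 1 / 3 ^ n := by
  rw [← Summable.tsum_sub (hF_summable (extK w)) (hF_summable (ext0 w)),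
    tsum_congr (g := fun i => if i < n then (0:ℝ) else 2 / 3 ^ (i + 1)) (fun i => ?_),
    tail_sum 2 n]
  · norm_num
  · unfold hF extK ext0
    by_cases hi : i < n
    · simp [hi]
    · simp [hi, Fin.val_last]

lemma diff_rho {n : ℕ} (w : Fin n → Fin (2 + 1)) :
    (∑' i, hF (fun i => rho (extK w i)) i) - ∑' i, hF (fun i => rho (ext0 w i)) i
      = -1 / 2 / 3 ^ n := by
  rw [← Summable.tsum_sub (hF_summable _) (hF_summable _),
    tsum_congr (g := fun i => if i < n then (0:ℝ) else (-1) / 3 ^ (i + 1)) (fun i => ?_),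
    tail_sum (-1) n]
  · unfold hF extK ext0
    by_cases hi : i < n
    · simp [hi]
    · have h1 : rho (Fin.last 2) = 1 := by decide
      have h0 : rho 0 = 0 := by decide
      simp [hi, h1, h0, show rho 2 = 1 from h1]

/-- On the 5-adic Cantor set, with the transposition `ρ = (1 2)`, the digit-permuting
map `T_ρ` and the function `h(∑ 2 s_i/5^i) = ∑ (−1)^{s_i} s_i/3^i`, one has
`φ_n(1,h) = 2` and `φ_n(1∘T_ρ, h∘T_ρ) = −1` for all `n`; both pairs are integrable,
with `φ(1,h) = 2` and `φ(1∘T_ρ, h∘T_ρ) = −(1/2)·φ(1,h)`; in particular integration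
by substitution with a fixed sign fails for `ρ`. -/
theorem substitution_fails_for_permutation
    (T h : ℝ → ℝ)
    (hT : ∀ s : ℕ → Fin (2 + 1), T (cval 2 s) = cval 2 (fun i => rho (s i)))
    (hh : ∀ s : ℕ → Fin (2 + 1),
      h (cval 2 s) = ∑' i : ℕ, (-1 : ℝ) ^ ((s i : ℕ)) * ((s i : ℕ) : ℝ) / 3 ^ (i + 1)) :
    (∀ n : ℕ, phiC 2 (fun _ => 1) h n = 2) ∧
    (∀ n : ℕ, phiC 2 ((fun _ => (1 : ℝ)) ∘ T) (h ∘ T) n = -1) ∧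
    Tendsto (phiC 2 (fun _ => 1) h) atTop (nhds 2) ∧
    Tendsto (phiC 2 ((fun _ => (1 : ℝ)) ∘ T) (h ∘ T)) atTop (nhds (-(1 / 2) * 2)) := by

  have key1 : ∀ (n : ℕ) (w : Fin n → Fin (2+1)), h (bPt w) - h (aPt w) = 1 / 3 ^ n := by
    intro n w
    rw [show bPt w = cval 2 (extK w) from rfl, show aPt w = cval 2 (ext0 w) from rfl,
      hh, hh]
    exact diff_plain w
  have key2 : ∀ (n : ℕ) (w : Fin n → Fin (2+1)),
      h (T (bPt w)) - h (T (aPt w)) = -1 / 2 / 3 ^ n := by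
    intro n w
    rw [show bPt w = cval 2 (extK w) from rfl, show aPt w = cval 2 (ext0 w) from rfl,
      hT, hT, hh, hh]
    exact diff_rho w
  have hcard : ∀ n : ℕ, (Finset.univ : Finset (Fin n → Fin (2+1))).card = 3 ^ n := by
    intro n
    simp [Finset.card_univ]
  have h1 : ∀ n : ℕ, phiC 2 (fun _ => 1) h n = 2 := by
    intro n
    unfold phiC
    rw [Finset.sum_congr rfl (fun w _ => by
      rw [key1 n w] : ∀ w ∈ Finset.univ, ((1:ℝ) + 1) * (h (bPt w) - h (aPt w))
        = (1 + 1) * (1 / 3 ^ n))]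
    rw [Finset.sum_const, hcard n, nsmul_eq_mul]
    push_cast
    field_simp
    norm_num
  have h2 : ∀ n : ℕ, phiC 2 ((fun _ => (1 : ℝ)) ∘ T) (h ∘ T) n = -1 := by
    intro n
    unfold phiC
    rw [Finset.sum_congr rfl (fun w _ => by
      rw [Function.comp, Function.comp, Function.comp, Function.comp, key2 n w] :
      ∀ w ∈ Finset.univ,
        (((fun _ => (1:ℝ)) ∘ T) (aPt w) + ((fun _ => (1:ℝ)) ∘ T) (bPt w)) *
          ((h ∘ T) (bPt w) - (h ∘ T) (aPt w)) = (1 + 1) * (-1 / 2 / 3 ^ n))]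
    rw [Finset.sum_const, hcard n, nsmul_eq_mul]
    push_cast
    field_simp
    ring
  refine ⟨h1, h2, tendsto_const_nhds.congr (fun n => (h1 n).symm), ?_⟩
  have : -(1/2 : ℝ) * 2 = -1 := by norm_num
  rw [this]
  exact tendsto_const_nhds.congr (fun n => (h2 n).symm)
end
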